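/- arXiv:2306.17377 — 2 statements merged into one kernel-verified Lean document; each statement's English description precedes it below -/
import Mathlib

section
/- For every real-valued $2\pi$-periodic trigonometric polynomial $y$ and all real constants $c, g_0$, the pointwise identity $\partial_u\big(\hat S y\big) = \hat S_1(y)\,(\partial_u y)$ holds, where $\hat S$ is the Babenko operator and $\hat S_1(y)$ its linearization. -/
open MeasureTheory
open scoped Real

/-- A trigonometric polynomial `u ↦ ∑ₖ aₖ e^{iku}`, represented by its finitely supported
Fourier coefficients; multiplication of coefficients is convolution, which corresponds to
pointwise multiplication of the associated functions. -/
abbrev TrigPoly : Type := AddMonoidAlgebra ℂ ℤ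

/-- Evaluation of a trigonometric polynomial: `teval c u = ∑ k, c k * exp (i k u)`. -/
noncomputable def teval (c : TrigPoly) (u : ℝ) : ℂ :=
  Finsupp.sum c.coeff fun k a => a * Complex.exp (Complex.I * (k : ℂ) * (u : ℂ))

/-- The Fourier multiplier operator with symbol `m`. -/
noncomputable def mulOp (m : ℤ → ℂ) (c : TrigPoly) : TrigPoly :=
  Finsupp.sum c.coeff fun k a => AddMonoidAlgebra.single k (m k * a)

/-- The circular Hilbert transform `Ĥ e^{iku} = i sign(k) e^{iku}` (with `sign 0 = 0`). -/
noncomputable def Hop : TrigPoly → TrigPoly := mulOp fun k => Complex.I * (Int.sign k : ℂ)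

/-- The operator `k̂ e^{iku} = |k| e^{iku}`. -/
noncomputable def Kop : TrigPoly → TrigPoly := mulOp fun k => ((|k| : ℤ) : ℂ)

/-- Differentiation `∂ᵤ e^{iku} = i k e^{iku}`. -/
noncomputable def Dop : TrigPoly → TrigPoly := mulOp fun k => Complex.I * (k : ℂ)

/-- A trigonometric polynomial is real-valued. -/
def RealValued (c : TrigPoly) : Prop := ∀ u : ℝ, (teval c u).im = 0
/-- The Babenko operator `Ŝ y = c²k̂y - g₀[ xᵤ y - Ĥ(y yᵤ) ]` with `xᵤ = 1 + k̂y`,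
`yᵤ = ∂ᵤ y`. -/
noncomputable def Sop (c g0 : ℝ) (y : TrigPoly) : TrigPoly :=
  (c ^ 2 : ℂ) • Kop y - (g0 : ℂ) • ((1 + Kop y) * y - Hop (y * Dop y))

/-- The linearized Babenko operator
`Ŝ₁(y) f = (c²k̂ - g₀)f - g₀[ y (k̂f) + f (k̂y) + k̂(yf) ]`. -/
noncomputable def S1op (c g0 : ℝ) (y f : TrigPoly) : TrigPoly :=
  (c ^ 2 : ℂ) • Kop f - (g0 : ℂ) • f
    - (g0 : ℂ) • (y * Kop f + f * Kop y + Kop (y * f))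

/-!
Differentiation is a derivation of the convolution algebra of Fourier coefficients, because its
symbol `k ↦ i k` is additive; it commutes with every Fourier multiplier, and `∂ᵤ Ĥ = -k̂` since
`i k · i sign k = -|k|`. Differentiating `Ŝ y` with these three rules gives `Ŝ₁(y) (∂ᵤ y)`
term by term.
-/

namespace mulOp

variable (m m' : ℤ → ℂ)

lemma coeff_apply (x : TrigPoly) (k : ℤ) : (mulOp m x).coeff k = m k * x.coeff k := by
  classical
  simp only [mulOp, AddMonoidAlgebra.coeff_finsuppSum, AddMonoidAlgebra.coeff_single,
    Finsupp.sum_apply, Finsupp.single_apply]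
  rw [Finsupp.sum, Finset.sum_eq_single k (by intro j _ hj; simp [hj])
    (by intro hk; simp [Finsupp.notMem_support_iff.mp hk])]
  simp

lemma zero : mulOp m 0 = 0 := by
  ext k; simp [coeff_apply]

lemma single (k : ℤ) (a : ℂ) :
    mulOp m (AddMonoidAlgebra.single k a) = AddMonoidAlgebra.single k (m k * a) := by
  ext j
  simp only [coeff_apply, AddMonoidAlgebra.coeff_single, Finsupp.single_apply]
  split_ifs with h <;> simp [h]

lemma add (x y : TrigPoly) : mulOp m (x + y) = mulOp m x + mulOp m y := by
  ext k; simp [coeff_apply, mul_add]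

lemma sub (x y : TrigPoly) : mulOp m (x - y) = mulOp m x - mulOp m y := by
  ext k; simp [coeff_apply, mul_sub]

lemma smul (s : ℂ) (x : TrigPoly) : mulOp m (s • x) = s • mulOp m x := by
  ext k; simp [coeff_apply, mul_left_comm]

lemma comp (x : TrigPoly) : mulOp m (mulOp m' x) = mulOp (fun k => m k * m' k) x := by
  ext k; simp [coeff_apply, mul_assoc]

lemma comm (x : TrigPoly) : mulOp m (mulOp m' x) = mulOp m' (mulOp m x) := by
  rw [comp, comp]; simp_rw [mul_comm]

variable {m}

lemma leibniz_single (hm : ∀ k l, m (k + l) = m k + m l) (k l : ℤ) (a b : ℂ) :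
    mulOp m (AddMonoidAlgebra.single k a * AddMonoidAlgebra.single l b)
      = mulOp m (AddMonoidAlgebra.single k a) * AddMonoidAlgebra.single l b
        + AddMonoidAlgebra.single k a * mulOp m (AddMonoidAlgebra.single l b) := by
  simp only [AddMonoidAlgebra.single_mul_single, single, hm, ← AddMonoidAlgebra.single_add]
  ring_nf

lemma leibniz (hm : ∀ k l, m (k + l) = m k + m l) (x y : TrigPoly) :
    mulOp m (x * y) = mulOp m x * y + x * mulOp m y := by
  induction x using AddMonoidAlgebra.induction_linear with
  | zero => simp only [zero, zero_mul, add_zero]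
  | add x₁ x₂ h₁ h₂ => rw [add_mul, add, h₁, h₂, add, add_mul, add_mul]; abel
  | single k a =>
    induction y using AddMonoidAlgebra.induction_linear with
    | zero => simp only [zero, mul_zero, add_zero]
    | add y₁ y₂ h₁ h₂ => rw [mul_add, add, h₁, h₂, add, mul_add, mul_add]; abel
    | single l b => exact leibniz_single hm k l a b

end mulOp

lemma Dop_mul (x y : TrigPoly) : Dop (x * y) = Dop x * y + x * Dop y :=
  mulOp.leibniz (fun k l => by push_cast; ring) x y

lemma Dop_add (x y : TrigPoly) : Dop (x + y) = Dop x + Dop y := mulOp.add _ x y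

lemma Dop_sub (x y : TrigPoly) : Dop (x - y) = Dop x - Dop y := mulOp.sub _ x y

lemma Dop_smul (s : ℂ) (x : TrigPoly) : Dop (s • x) = s • Dop x := mulOp.smul _ s x

lemma Dop_Kop (x : TrigPoly) : Dop (Kop x) = Kop (Dop x) :=
  mulOp.comm _ _ x

lemma Dop_Hop (x : TrigPoly) : Dop (Hop x) = -Kop x := by
  have symbol (k : ℤ) : Complex.I * k * (Complex.I * k.sign) = -((|k| : ℤ) : ℂ) := by
    rw [mul_mul_mul_comm, Complex.I_mul_I, ← Int.cast_mul, Int.mul_sign_self,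
      Int.abs_eq_natAbs]
    simp
  ext k
  simp [Dop, Hop, Kop, mulOp.comp, mulOp.coeff_apply, symbol]

lemma Dop_Sop (c g0 : ℝ) (y : TrigPoly) : Dop (Sop c g0 y) = S1op c g0 y (Dop y) := by
  simp only [Sop, S1op, add_mul, one_mul, Dop_sub, Dop_smul, Dop_add, Dop_mul, Dop_Kop, Dop_Hop,
    mul_comm (Kop (Dop y)) y, mul_comm (Dop y) (Kop y)]
  module

theorem deriv_Babenko_eq_linearization_of_deriv_general (c g0 : ℝ) (y : TrigPoly) :
    ∀ u : ℝ, teval (Dop (Sop c g0 y)) u = teval (S1op c g0 y (Dop y)) u := by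
  intro u
  rw [Dop_Sop]

/-- Pointwise identity `∂ᵤ(Ŝ y) = Ŝ₁(y)(∂ᵤ y)` for every real-valued 2π-periodic trigonometric
polynomial y and all real constants c, g₀. -/
theorem deriv_Babenko_eq_linearization_of_deriv (c g0 : ℝ) (y : TrigPoly)
    (hy : RealValued y) :
    ∀ u : ℝ, teval (Dop (Sop c g0 y)) u = teval (S1op c g0 y (Dop y)) u :=
  deriv_Babenko_eq_linearization_of_deriv_general c g0 y
end

section
/- Hardy-space property of the auxiliary conformal map: for $0 < L \le 1$, let $u(q) = 2\arctan\big(L\tan(q/2)\big)$ for $q \in (-\pi,\pi)$, extended by $u(\pm\pi) = \pm\pi$. Then for all integers $k \ge 1$ and $n \ge 1$, $\int_{-\pi}^{\pi} e^{i k\, u(q)}\, e^{i n q}\, dq = 0$; i.e., every negative-frequency Fourier coefficient of the $2\pi$-periodic function $q \mapsto e^{iku(q)}$ vanishes. -/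
/-!
Since `e^{iq} = (1 + i tan(q/2)) / (1 - i tan(q/2))`, the Cayley transform `s ↦ (1 + is)/(1 - is)`
turns `tan(u/2) = L tan(q/2)` into `e^{iu(q)} = B(e^{iq})` for the Möbius map
`B(z) = ((1 + L) z + (1 - L)) / ((1 - L) z + (1 + L))`, whose pole `-(1 + L)/(1 - L)` lies
outside the closed unit disk for `L > 0`. Hence
`∫ e^{iku(q)} e^{inq} dq = -i ∮_{|z|=1} B(z)^k z^{n-1} dz`, which vanishes by Cauchy's theorem.
-/

open scoped Real

open Complex Metric Set

theorem exp_two_mul_mul_I_eq_cayley_tan {x : ℂ} (hx : cos x ≠ 0) :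
    exp (2 * x * I) = (1 + tan x * I) / (1 - tan x * I) := by
  have hcayley :
      (1 + tan x * I) / (1 - tan x * I) = (cos x + sin x * I) / (cos x - sin x * I) := by
    rw [tan_eq_sin_div_cos, ← mul_div_mul_left _ _ hx]
    congr 1 <;> field_simp
  rw [hcayley, cos_add_sin_I, cos_sub_sin_I, eq_div_iff (exp_ne_zero _), ← exp_add]
  ring_nf

noncomputable def conformalMobius (L z : ℂ) : ℂ :=
  ((1 + L) * z + (1 - L)) / ((1 - L) * z + (1 + L))

theorem conformalMobius_cayley {L s : ℂ} (hs : 1 - s * I ≠ 0) (hLs : 1 - L * s * I ≠ 0) :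
    conformalMobius L ((1 + s * I) / (1 - s * I)) = (1 + L * s * I) / (1 - L * s * I) := by
  have hden :
      (1 - L) * ((1 + s * I) / (1 - s * I)) + (1 + L) = 2 * (1 - L * s * I) / (1 - s * I) := by
    field_simp; ring
  rw [conformalMobius, hden, div_eq_div_iff (by simp [hs, hLs]) hLs]
  field_simp
  ring

theorem conformalMobius_denom_ne_zero {L : ℝ} (hL : 0 < L) {z : ℂ} (hz : ‖z‖ ≤ 1) :
    (1 - L) * z + (1 + L : ℂ) ≠ 0 := by
  have : ‖((1 - L : ℝ) : ℂ) * z‖ < ‖((1 + L : ℝ) : ℂ)‖ := by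
    rw [norm_mul, norm_real, norm_real, Real.norm_eq_abs, Real.norm_eq_abs,
      abs_of_pos (by linarith : (0 : ℝ) < 1 + L)]
    calc |1 - L| * ‖z‖ ≤ |1 - L| := mul_le_of_le_one_right (abs_nonneg _) hz
      _ < 1 + L := abs_sub_lt_iff.mpr ⟨by linarith, by linarith⟩
  intro h
  rw [add_eq_zero_iff_eq_neg] at h
  push_cast at this
  rw [h, norm_neg] at this
  exact lt_irrefl _ this

theorem diffContOnCl_conformalMobius {L : ℝ} (hL : 0 < L) :
    DiffContOnCl ℂ (conformalMobius L) (ball 0 1) := by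
  refine DifferentiableOn.diffContOnCl_ball (U := closedBall 0 1) ?_ subset_rfl
  intro z hz
  refine (DifferentiableAt.div (by fun_prop) (by fun_prop) ?_).differentiableWithinAt
  exact conformalMobius_denom_ne_zero hL (by simpa using hz)

noncomputable def conformalAngle (L q : ℝ) : ℝ :=
  if q = π then π else if q = -π then -π else 2 * Real.arctan (L * Real.tan (q / 2))

theorem conformalMobius_neg_one {L : ℂ} (hL : L ≠ 0) : conformalMobius L (-1) = -1 := by
  rw [conformalMobius, div_eq_iff (by ring_nf; simpa using hL)]
  ring

theorem exp_conformalAngle_mul_I {L q : ℝ} (hL : L ≠ 0) (hq : q ∈ Icc (-π) π) :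
    exp (conformalAngle L q * I) = conformalMobius L (exp (q * I)) := by
  unfold conformalAngle
  split_ifs with hpi hnpi
  · simp [hpi, exp_pi_mul_I, conformalMobius_neg_one (ofReal_ne_zero.mpr hL)]
  · simp [hnpi, exp_neg, exp_pi_mul_I, conformalMobius_neg_one (ofReal_ne_zero.mpr hL)]
  have hq' : q / 2 ∈ Ioo (-(π / 2)) (π / 2) :=
    ⟨by linarith [lt_of_le_of_ne hq.1 (Ne.symm hnpi)], by linarith [lt_of_le_of_ne hq.2 hpi]⟩
  set t := Real.tan (q / 2)
  have hcayley (s : ℝ) : 1 - (s : ℂ) * I ≠ 0 := fun h => by simpa using congrArg re h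
  have hexp_q : exp (q * I) = (1 + t * I) / (1 - t * I) := by
    rw [show (q : ℂ) = 2 * ((q / 2 : ℝ) : ℂ) by push_cast; ring, ofReal_tan,
      exp_two_mul_mul_I_eq_cayley_tan]
    rw [← ofReal_cos]; exact_mod_cast (Real.cos_pos_of_mem_Ioo hq').ne'
  have hexp_u :
      exp (((2 * Real.arctan (L * t) : ℝ) : ℂ) * I) = (1 + L * t * I) / (1 - L * t * I) := by
    rw [ofReal_mul, ofReal_ofNat, exp_two_mul_mul_I_eq_cayley_tan, ← ofReal_tan, Real.tan_arctan]
    · push_cast; rfl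
    · rw [← ofReal_cos]; exact_mod_cast (Real.cos_arctan_pos _).ne'
  rw [hexp_u, hexp_q, conformalMobius_cayley (hcayley t) (by exact_mod_cast hcayley (L * t))]

theorem integral_comp_exp_mul_I_mul_pow_eq_zero {f : ℂ → ℂ}
    (hf : DiffContOnCl ℂ f (ball 0 1)) {n : ℕ} (hn : n ≠ 0) :
    ∫ q in (-π)..π, f (exp (q * I)) * exp (q * I) ^ n = 0 := by
  have hper : Function.Periodic (fun q : ℝ => f (exp (q * I)) * exp (q * I) ^ n) (2 * π) := by
    intro q
    simp only [ofReal_add, add_mul, exp_add, ofReal_mul, ofReal_ofNat, exp_two_pi_mul_I, mul_one]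
  have hcircle : ∮ z in C(0, 1), z ^ (n - 1) * f z = 0 :=
    ((differentiable_id.pow _).diffContOnCl.smul hf).circleIntegral_eq_zero zero_le_one
  calc ∫ q in (-π)..π, f (exp (q * I)) * exp (q * I) ^ n
      = ∫ q in (0 : ℝ)..2 * π, f (exp (q * I)) * exp (q * I) ^ n := by
        simpa [show -π + 2 * π = π by ring] using hper.intervalIntegral_add_eq (-π) 0
    _ = -I * ∮ z in C(0, 1), z ^ (n - 1) * f z := by
        rw [circleIntegral, ← intervalIntegral.integral_const_mul]
        refine intervalIntegral.integral_congr fun θ _ => ?_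
        obtain ⟨m, rfl⟩ := Nat.exists_eq_add_one_of_ne_zero hn
        simp only [deriv_circleMap, circleMap_zero, ofReal_one, one_mul, smul_eq_mul,
          Nat.add_sub_cancel, pow_succ]
        linear_combination (f (exp (θ * I)) * exp (θ * I) ^ (m + 1)) * I_sq
    _ = 0 := by rw [hcircle, mul_zero]

theorem auxiliary_conformal_map_hardy_general (L : ℝ) (hL0 : 0 < L)
    (k n : ℤ) (hk : 1 ≤ k) (hn : 1 ≤ n) :
    let u : ℝ → ℝ := fun q =>
      if q = π then π else if q = -π then -π else 2 * Real.arctan (L * Real.tan (q / 2))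
    ∫ q in (-π)..π,
        Complex.exp (Complex.I * (k : ℂ) * (u q : ℂ))
          * Complex.exp (Complex.I * (n : ℂ) * (q : ℂ)) = 0 := by
  intro u
  lift k to ℕ using by omega
  lift n to ℕ using by omega
  have hu (q : ℝ) : u q = conformalAngle L q := rfl
  rw [← integral_comp_exp_mul_I_mul_pow_eq_zero (f := fun z => conformalMobius L z ^ k) (n := n)
    ((differentiable_pow k).comp_diffContOnCl (diffContOnCl_conformalMobius hL0)) (by omega)]
  refine intervalIntegral.integral_congr fun q hq => ?_
  rw [uIcc_of_le (by linarith [Real.pi_pos])] at hq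
  simp only [hu, ← exp_conformalAngle_mul_I hL0.ne' hq, ← exp_nat_mul]
  push_cast
  ring_nf

/-- Hardy-space property of the auxiliary conformal map: for 0 < L ≤ 1 and
`u(q) = 2 arctan(L tan(q/2))` on (-π, π), extended by `u(±π) = ±π`, every
negative-frequency Fourier coefficient of the 2π-periodic function `q ↦ e^{iku(q)}`
vanishes: `∫_{-π}^{π} e^{iku(q)} e^{inq} dq = 0` for all integers k ≥ 1 and n ≥ 1. -/
theorem auxiliary_conformal_map_hardy (L : ℝ) (hL0 : 0 < L) (hL1 : L ≤ 1)
    (k n : ℤ) (hk : 1 ≤ k) (hn : 1 ≤ n) :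
    let u : ℝ → ℝ := fun q =>
      if q = π then π else if q = -π then -π else 2 * Real.arctan (L * Real.tan (q / 2))
    ∫ q in (-π)..π,
        Complex.exp (Complex.I * (k : ℂ) * (u q : ℂ))
          * Complex.exp (Complex.I * (n : ℂ) * (q : ℂ)) = 0 :=
  auxiliary_conformal_map_hardy_general L hL0 k n hk hn
end
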